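/- Let A be an N×N primitive nonnegative matrix with Perron–Frobenius eigenvalue λ, and fix a state k. Define the vector y by y_i = 1_{{i = k}} + Σ_{n=1}^{∞} λ^{−n} Σ_{i_1,…,i_{n−1} ≠ k} A(k,i_1)A(i_1,i_2)⋯A(i_{n−1},i)·1_{{i ≠ k}}, where the inner sum ranges over all (n−1)-tuples of states all different from k (for n = 1 the term is λ^{−1}A(k,i)·1_{{i≠k}}). Then all these series converge, y is nonnegative with y_k = 1, and y is a left eigenvector of A for the eigenvalue λ: for every j, Σ_{i=1}^{N} y_i A(i,j) = λ y_j. -/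

import Mathlib

/-!
Zeroing row `k` of `A` gives the taboo matrix `P = A.updateRow k 0`, and
`pathSumAvoiding A k n = A k ᵥ* Pⁿ`. Since `u ᵥ* P = λ • u - u k • A k`, the matrix
`S = λ⁻¹ • P` satisfies `u - u ᵥ* S = λ⁻¹ u k • A k`, so the series `∑ₙ (u - u ᵥ* S) ᵥ* Sⁿ`
telescopes to `u` as soon as `u ᵥ* Sⁿ → 0`. Primitivity gives this decay:
`u ᵥ* Pᵐ ≤ (u ᵥ* P) ᵥ* Aᵐ⁻¹ = λᵐ • u - u k • (Aᵐ) k` is strictly below `λᵐ • u`, so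
`u ᵥ* Sᵐ ≤ θ • u` for some `θ < 1` and `u ᵥ* Sⁿ` decays geometrically.
Hence `∑ₙ λ⁻ⁿ⁻¹ • pathSumAvoiding A k n = u / u k`, i.e. `y = u / u k`, a left eigenvector.
-/

/-- `pathSumAvoiding A k n j = ∑_{i₁,…,iₙ ≠ k} A k i₁ * A i₁ i₂ * ⋯ * A iₙ j`,
the sum over all `n`-tuples of states different from `k` of the products of
the entries of `A` along the path `k, i₁, …, iₙ, j`.  For `n = 0` it is `A k j`. -/
def pathSumAvoiding {N : ℕ} (A : Matrix (Fin N) (Fin N) ℝ) (k : Fin N) :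
    ℕ → Fin N → ℝ
  | 0 => fun j => A k j
  | n + 1 => fun j => ∑ i, if i = k then 0 else pathSumAvoiding A k n i * A i j

open Filter Topology Matrix

theorem exists_lt_one_le_smul_of_forall_lt {ι : Type*} [Finite ι] {v w : ι → ℝ}
    (h : ∀ i, v i < w i) : ∃ θ : ℝ, 0 < θ ∧ θ < 1 ∧ v ≤ θ • w := by
  have hnear : ∀ᶠ θ in 𝓝 (1 : ℝ), ∀ i, v i < θ * w i := eventually_all.2 fun i =>
    ((continuous_mul_const (w i)).tendsto' 1 (w i) (one_mul _)).eventually (lt_mem_nhds (h i))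
  obtain ⟨θ, hθv, hθ⟩ :=
    ((hnear.filter_mono nhdsWithin_le_nhds).and (Ioo_mem_nhdsLT (zero_lt_one' ℝ))).exists
  exact ⟨θ, hθ.1, hθ.2, fun i => (hθv i).le⟩

namespace Matrix

theorem updateRow_zero_apply_nonneg {ι κ R : Type*} [DecidableEq ι] [Zero R] [Preorder R]
    {M : Matrix ι κ R} (hM : ∀ i j, 0 ≤ M i j) (k i : ι) (j : κ) :
    0 ≤ M.updateRow k 0 i j := by
  rw [updateRow_apply]
  split_ifs
  exacts [le_rfl, hM i j]

section Ring

variable {ι κ R : Type*} [Fintype ι] [DecidableEq ι] [Ring R]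

theorem vecMul_updateRow_zero (v : ι → R) (M : Matrix ι κ R) (k : ι) :
    v ᵥ* M.updateRow k 0 = v ᵥ* M - v k • M k := by
  ext j
  simp [vecMul, dotProduct, updateRow_apply, mul_ite, Finset.sum_ite, Finset.filter_ne']

theorem vecMul_pow_eq_pow_smul {M : Matrix ι ι R} {u : ι → R} {c : R}
    (hu : u ᵥ* M = c • u) (n : ℕ) : u ᵥ* M ^ n = c ^ n • u := by
  induction n with
  | zero => simp
  | succ n ih => rw [pow_succ, ← vecMul_vecMul, ih, smul_vecMul, hu, smul_smul, pow_succ]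

end Ring

section OrderedRing

variable {ι κ R : Type*} [Fintype ι] [Ring R] [PartialOrder R] [IsOrderedRing R]

theorem vecMul_mono_left {M : Matrix ι κ R} (hM : ∀ i j, 0 ≤ M i j) {v w : ι → R}
    (h : v ≤ w) : v ᵥ* M ≤ w ᵥ* M := fun j =>
  Finset.sum_le_sum fun i _ => mul_le_mul_of_nonneg_right (h i) (hM i j)

theorem vecMul_mono_right {M N : Matrix ι κ R} (h : ∀ i j, M i j ≤ N i j) {v : ι → R}
    (hv : 0 ≤ v) : v ᵥ* M ≤ v ᵥ* N := fun j =>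
  Finset.sum_le_sum fun i _ => mul_le_mul_of_nonneg_left (h i j) (hv i)

theorem vecMul_nonneg {M : Matrix ι κ R} (hM : ∀ i j, 0 ≤ M i j) {v : ι → R} (hv : 0 ≤ v) :
    0 ≤ v ᵥ* M := by
  simpa using vecMul_mono_left hM hv

variable [DecidableEq ι]

theorem vecMul_pow_mono {M N : Matrix ι ι R} (hM : ∀ i j, 0 ≤ M i j)
    (hMN : ∀ i j, M i j ≤ N i j) (n : ℕ) {v : ι → R} (hv : 0 ≤ v) :
    v ᵥ* M ^ n ≤ v ᵥ* N ^ n := by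
  induction n generalizing v with
  | zero => rfl
  | succ n ih =>
    have hN : ∀ i j, 0 ≤ N i j := fun i j => (hM i j).trans (hMN i j)
    simp only [pow_succ', ← vecMul_vecMul]
    exact (ih (vecMul_nonneg hM hv)).trans
      (vecMul_mono_left (pow_apply_nonneg hN n) (vecMul_mono_right hMN hv))

theorem vecMul_pow_le_pow_smul {M : Matrix ι ι R} (hM : ∀ i j, 0 ≤ M i j) {u : ι → R} {c : R}
    (hc : 0 ≤ c) (hu : u ᵥ* M ≤ c • u) (n : ℕ) : u ᵥ* M ^ n ≤ c ^ n • u := by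
  induction n with
  | zero => simp
  | succ n ih =>
    calc u ᵥ* M ^ (n + 1) = (u ᵥ* M ^ n) ᵥ* M := by rw [pow_succ, vecMul_vecMul]
      _ ≤ (c ^ n • u) ᵥ* M := vecMul_mono_left hM ih
      _ = c ^ n • u ᵥ* M := smul_vecMul _ _ _
      _ ≤ c ^ n • c • u := smul_le_smul_of_nonneg_left hu (pow_nonneg hc n)
      _ = c ^ (n + 1) • u := by rw [smul_smul, pow_succ]

theorem vecMul_updateRow_zero_pow_le {A : Matrix ι ι R} (hA : ∀ i j, 0 ≤ A i j) {u : ι → R}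
    (hu : 0 ≤ u) {c : R} (hu_eig : u ᵥ* A = c • u) (k : ι) {m : ℕ} (hm : m ≠ 0) :
    u ᵥ* A.updateRow k 0 ^ m ≤ c ^ m • u - u k • (A ^ m) k := by
  obtain ⟨n, rfl⟩ := Nat.exists_eq_succ_of_ne_zero hm
  have hP := updateRow_zero_apply_nonneg hA k
  have hPA : ∀ i j, A.updateRow k 0 i j ≤ A i j := fun i j => by
    rw [updateRow_apply]; split_ifs <;> simp [hA]
  calc u ᵥ* A.updateRow k 0 ^ (n + 1) = (u ᵥ* A.updateRow k 0) ᵥ* A.updateRow k 0 ^ n := by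
        rw [pow_succ', vecMul_vecMul]
    _ ≤ (u ᵥ* A.updateRow k 0) ᵥ* A ^ n := vecMul_pow_mono hP hPA n (vecMul_nonneg hP hu)
    _ = c ^ (n + 1) • u - u k • (A ^ (n + 1)) k := by
      rw [vecMul_updateRow_zero, hu_eig, sub_vecMul, smul_vecMul, smul_vecMul,
        vecMul_pow_eq_pow_smul hu_eig, smul_smul, ← pow_succ', pow_succ' A]
      rfl

end OrderedRing

section Real

variable {ι : Type*} [Fintype ι] [DecidableEq ι]

theorem tendsto_vecMul_pow_nhds_zero {M : Matrix ι ι ℝ} (hM : ∀ i j, 0 ≤ M i j)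
    {u : ι → ℝ} (hu : 0 ≤ u) (hu_sub : u ᵥ* M ≤ u) {m : ℕ} (hm : m ≠ 0) {θ : ℝ} (hθ₀ : 0 ≤ θ)
    (hθ₁ : θ < 1) (hθ : u ᵥ* M ^ m ≤ θ • u) :
    Tendsto (fun n => u ᵥ* M ^ n) atTop (𝓝 0) := by
  have hbound : ∀ n, u ᵥ* M ^ n ≤ θ ^ (n / m) • u := fun n =>
    calc u ᵥ* M ^ n = (u ᵥ* (M ^ m) ^ (n / m)) ᵥ* M ^ (n % m) := by
          rw [vecMul_vecMul, ← pow_mul, ← pow_add, Nat.div_add_mod]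
      _ ≤ (θ ^ (n / m) • u) ᵥ* M ^ (n % m) :=
          vecMul_mono_left (pow_apply_nonneg hM _)
            (vecMul_pow_le_pow_smul (pow_apply_nonneg hM m) hθ₀ hθ _)
      _ = θ ^ (n / m) • u ᵥ* M ^ (n % m) := smul_vecMul _ _ _
      _ ≤ θ ^ (n / m) • u := by
          refine smul_le_smul_of_nonneg_left ?_ (pow_nonneg hθ₀ _)
          simpa using vecMul_pow_le_pow_smul hM zero_le_one (by simpa using hu_sub) (n % m)
  have hgeom : Tendsto (fun n => θ ^ (n / m)) atTop (𝓝 0) :=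
    (tendsto_pow_atTop_nhds_zero_of_lt_one hθ₀ hθ₁).comp (Nat.tendsto_div_const_atTop hm)
  refine tendsto_pi_nhds.2 fun j =>
    squeeze_zero (fun n => vecMul_nonneg (pow_apply_nonneg hM n) hu j) (fun n => hbound n j) ?_
  simpa using hgeom.mul_const (u j)

theorem hasSum_vecMul_pow {M : Matrix ι ι ℝ} (hM : ∀ i j, 0 ≤ M i j) {u : ι → ℝ}
    (hu_sub : u ᵥ* M ≤ u) (hlim : Tendsto (fun n => u ᵥ* M ^ n) atTop (𝓝 0)) :
    HasSum (fun n => (u - u ᵥ* M) ᵥ* M ^ n) u := by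
  have htelescope : ∀ n, ∑ t ∈ Finset.range n, (u - u ᵥ* M) ᵥ* M ^ t = u - u ᵥ* M ^ n := by
    intro n
    simp_rw [sub_vecMul, vecMul_vecMul, ← pow_succ']
    simpa using Finset.sum_range_sub' (fun t => u ᵥ* M ^ t) n
  refine Pi.hasSum.2 fun j => (hasSum_iff_tendsto_nat_of_nonneg (fun n => ?_) _).2 ?_
  · exact vecMul_nonneg (pow_apply_nonneg hM n) (sub_nonneg.2 hu_sub) j
  · simp_rw [← Finset.sum_apply, htelescope]
    simpa using (tendsto_const_nhds (x := u j)).sub ((continuous_apply j).tendsto 0 |>.comp hlim)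

end Real

end Matrix

theorem pathSumAvoiding_eq_vecMul_pow {N : ℕ} (A : Matrix (Fin N) (Fin N) ℝ) (k : Fin N)
    (n : ℕ) : pathSumAvoiding A k n = A k ᵥ* A.updateRow k 0 ^ n := by
  induction n with
  | zero => simp [pathSumAvoiding]
  | succ n ih =>
    ext j
    rw [pow_succ, ← vecMul_vecMul, ← ih]
    simp [pathSumAvoiding, vecMul, dotProduct, updateRow_apply, mul_ite]

theorem hasSum_pathSumAvoiding {N : ℕ} {A : Matrix (Fin N) (Fin N) ℝ}
    (hA : ∀ i j, 0 ≤ A i j) (hA_prim : ∃ m : ℕ, 0 < m ∧ ∀ i j, 0 < (A ^ m) i j)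
    {lam : ℝ} (hlam : 0 < lam) {u : Fin N → ℝ} (hu_pos : ∀ i, 0 < u i)
    (hu_eig : u ᵥ* A = lam • u) (k : Fin N) :
    HasSum (fun n => lam⁻¹ ^ (n + 1) • pathSumAvoiding A k n) ((u k)⁻¹ • u) := by
  obtain ⟨m, hm, hAm⟩ := hA_prim
  have hu : 0 ≤ u := fun i => (hu_pos i).le
  have hS : ∀ i j, 0 ≤ (lam⁻¹ • A.updateRow k 0) i j := fun i j =>
    mul_nonneg (inv_nonneg.2 hlam.le) (updateRow_zero_apply_nonneg hA k i j)
  have hu_S : u ᵥ* (lam⁻¹ • A.updateRow k 0) = u - (lam⁻¹ * u k) • A k := by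
    rw [vecMul_smul, vecMul_updateRow_zero, hu_eig, smul_sub, smul_smul, smul_smul,
      inv_mul_cancel₀ hlam.ne', one_smul]
  have hu_sub : u ᵥ* (lam⁻¹ • A.updateRow k 0) ≤ u := by
    rw [hu_S]
    exact sub_le_self _ (smul_nonneg (mul_pos (inv_pos.2 hlam) (hu_pos k)).le (hA k))
  obtain ⟨θ, hθ₀, hθ₁, hθ⟩ := exists_lt_one_le_smul_of_forall_lt
    (v := u ᵥ* (lam⁻¹ • A.updateRow k 0) ^ m) (w := u) fun j => by
      have hle := vecMul_updateRow_zero_pow_le hA hu hu_eig k hm.ne' j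
      have hpos : 0 < u k * (A ^ m) k j := mul_pos (hu_pos k) (hAm k j)
      rw [smul_pow, vecMul_smul, Pi.smul_apply, smul_eq_mul]
      calc lam⁻¹ ^ m * (u ᵥ* A.updateRow k 0 ^ m) j
          ≤ lam⁻¹ ^ m * (lam ^ m * u j - u k * (A ^ m) k j) := by
            gcongr
            simpa using hle
        _ < lam⁻¹ ^ m * (lam ^ m * u j) := by gcongr; linarith
        _ = u j := by rw [← mul_assoc, ← mul_pow, inv_mul_cancel₀ hlam.ne', one_pow, one_mul]
  have hsum := hasSum_vecMul_pow hS hu_sub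
    (tendsto_vecMul_pow_nhds_zero hS hu hu_sub hm.ne' hθ₀.le hθ₁ hθ)
  rw [hu_S, sub_sub_cancel] at hsum
  have hterm : ∀ n, ((lam⁻¹ * u k) • A k) ᵥ* (lam⁻¹ • A.updateRow k 0) ^ n =
      u k • lam⁻¹ ^ (n + 1) • pathSumAvoiding A k n := fun n => by
    rw [pathSumAvoiding_eq_vecMul_pow, smul_pow, vecMul_smul, smul_vecMul, smul_smul,
      smul_smul]
    congr 1
    ring
  simp_rw [hterm] at hsum
  simpa [(hu_pos k).ne'] using hsum.const_smul (u k)⁻¹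

theorem pathSum_vector_is_left_eigenvector_general
    {N : ℕ} (A : Matrix (Fin N) (Fin N) ℝ)
    (hA_nonneg : ∀ i j, 0 ≤ A i j)
    (hA_prim : ∃ m : ℕ, 0 < m ∧ ∀ i j, 0 < (A ^ m) i j)
    (lam : ℝ) (u : Fin N → ℝ)
    (hlam_pos : 0 < lam)
    (hu_pos : ∀ i, 0 < u i)
    (hu_eig : ∀ j, ∑ i, u i * A i j = lam * u j)
    (k : Fin N)
    (y : Fin N → ℝ)
    (hy : ∀ i, y i = (if i = k then 1 else 0) +
      ∑' n : ℕ, (if i = k then (0 : ℝ) else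
        lam⁻¹ ^ (n + 1) * pathSumAvoiding A k n i)) :
    (∀ i, Summable (fun n : ℕ => if i = k then (0 : ℝ) else
        lam⁻¹ ^ (n + 1) * pathSumAvoiding A k n i)) ∧
    (∀ i, 0 ≤ y i) ∧
    y k = 1 ∧
    (∀ j, ∑ i, y i * A i j = lam * y j) := by
  have hsum := hasSum_pathSumAvoiding hA_nonneg hA_prim hlam_pos hu_pos (funext hu_eig) k
  have hy_eq : y = (u k)⁻¹ • u := by
    funext i
    rw [hy i]
    by_cases hi : i = k
    · subst hi
      simp [(hu_pos i).ne']
    · simp only [hi, if_false, zero_add]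
      exact (Pi.hasSum.1 hsum i).tsum_eq
  refine ⟨fun i => ?_, fun i => ?_, ?_, fun j => ?_⟩
  · by_cases hi : i = k
    · simp [hi]
    · simpa [hi] using (Pi.hasSum.1 hsum i).summable
  · rw [hy_eq]
    exact mul_nonneg (inv_nonneg.2 (hu_pos k).le) (hu_pos i).le
  · rw [hy_eq]
    exact inv_mul_cancel₀ (hu_pos k).ne'
  · simp only [hy_eq, Pi.smul_apply, smul_eq_mul, mul_assoc, ← Finset.mul_sum, hu_eig]
    ring

/-- Let `A` be a primitive nonnegative matrix with Perron–Frobenius eigenvalue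
`lam` and fix a state `k`.  Define
`y i = 1_{i=k} + ∑_{n≥1} lam⁻ⁿ ∑_{i₁,…,i_{n−1} ≠ k} A(k,i₁)⋯A(i_{n−1},i) 1_{i≠k}`
(the term of index `n : ℕ` of the formal series below corresponds to the term
of index `n + 1` above).  Then all the series converge, `y` is nonnegative,
`y k = 1`, and `y` is a left eigenvector of `A` for the eigenvalue `lam`. -/
theorem pathSum_vector_is_left_eigenvector
    {N : ℕ} (A : Matrix (Fin N) (Fin N) ℝ)
    (hA_nonneg : ∀ i j, 0 ≤ A i j)
    (hA_prim : ∃ m : ℕ, 0 < m ∧ ∀ i j, 0 < (A ^ m) i j)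
    (lam : ℝ) (u : Fin N → ℝ)
    (hlam_pos : 0 < lam)
    (hu_pos : ∀ i, 0 < u i)
    (hu_sum : ∑ i, u i = 1)
    (hu_eig : ∀ j, ∑ i, u i * A i j = lam * u j)
    (k : Fin N)
    (y : Fin N → ℝ)
    (hy : ∀ i, y i = (if i = k then 1 else 0) +
      ∑' n : ℕ, (if i = k then (0 : ℝ) else
        lam⁻¹ ^ (n + 1) * pathSumAvoiding A k n i)) :
    (∀ i, Summable (fun n : ℕ => if i = k then (0 : ℝ) else
        lam⁻¹ ^ (n + 1) * pathSumAvoiding A k n i)) ∧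
    (∀ i, 0 ≤ y i) ∧
    y k = 1 ∧
    (∀ j, ∑ i, y i * A i j = lam * y j) :=
  pathSum_vector_is_left_eigenvector_general A hA_nonneg hA_prim lam u hlam_pos hu_pos hu_eig k y hy
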